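/- For every K > 0 there exist ε₀(K) > 0 and C(K) > 0 such that for every ε ∈ (0, ε₀(K)), every minimizing extremal (ω, θ, λ) for ε (with ω defined on [0,L]), and every t ∈ [0,L] with ω₂(t) ≥ K·ε, one has ω₁(s) ≥ C(K)·ε^{m̄} and ω₂(s) ≥ C(K)·ε for every s ∈ [t, L]. -/

import Mathlib

/-
A minimizer is no longer than the competitor `ω̄_ε`, so its excess length `L - ε` is `O(ε^{m-1})`.
For a unit-speed curve `|cos θ| ≤ δ/2 + (1 - sin θ)/δ`; integrating and optimizing in `δ` gives
`(ω₁ v - ω₁ u)² ≤ 2 (v - u)(L - ε)`, while `ω₂` is 1-Lipschitz. Hence `ω₂ ≥ Kε/2` after `t`,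
`|ω₁| = O(ε^{m/2})` and `|P(ω)| ≤ B ε^m`. The constraint turns `∫ P(ω)²` into
`∫ P(ω)² (1 - sin θ) ≤ B² ε^{2m} (L - ε) = O(ε^{3m-1})`. If `ω₁(s)²` were small compared with `ε^m`,
then `P(ω) ≤ -c ε^m` on an interval of length `κε` ending at `s`, so `∫ P(ω)² ≳ ε^{2m+1}`, which is
too large for small `ε`. So `ω₁` does not vanish on `[t, L]`, and it is positive at `L`.
-/

open MeasureTheory

/-- `P(x₁,x₂) = x₁² − x₂^m`. -/
noncomputable def Pf (m : ℕ) (x : ℝ × ℝ) : ℝ := x.1 ^ 2 - x.2 ^ m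

/-- `Q(x₁,x₂) = 4x₁(x₁² − x₂^m)`. -/
noncomputable def Qf (m : ℕ) (x : ℝ × ℝ) : ℝ := 4 * x.1 * (x.1 ^ 2 - x.2 ^ m)

/-- The reference curve `ω̄(t) = (t^{m/2}, t)`; in particular `A_ε = barCurve m ε`. -/
noncomputable def barCurve (m : ℕ) (t : ℝ) : ℝ × ℝ := (t ^ ((m : ℝ) / 2), t)

/-- Euclidean length `∫₀^τ ‖ζ'(t)‖ dt` of a curve with (a.e.) derivative `ζ'`. -/
noncomputable def eLength (ζ' : ℝ → ℝ × ℝ) (τ : ℝ) : ℝ :=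
  ∫ t in (0:ℝ)..τ, Real.sqrt ((ζ' t).1 ^ 2 + (ζ' t).2 ^ 2)

/-- `L(ω̄_ε) = ∫₀^ε √(1 + (m/2)² t^{m−2}) dt`. -/
noncomputable def barLength (m : ℕ) (ε : ℝ) : ℝ :=
  ∫ t in (0:ℝ)..ε, Real.sqrt (1 + ((m : ℝ) / 2) ^ 2 * t ^ (m - 2))

/-- A constrained competitor for `ε`: a Lipschitz curve `ζ : [0,τ] → ℝ²` with a.e. derivative
`ζ'`, joining `A₀ = (0,0)` to `A_ε = (ε^{m/2}, ε)`, with `∫₀^τ P(ζ(t))² ζ₂'(t) dt = 0`. -/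
def IsCompetitor (m : ℕ) (ε τ : ℝ) (ζ ζ' : ℝ → ℝ × ℝ) : Prop :=
  0 ≤ τ ∧
  (∃ K : NNReal, LipschitzOnWith K ζ (Set.Icc 0 τ)) ∧
  ζ 0 = ((0 : ℝ), (0 : ℝ)) ∧
  ζ τ = barCurve m ε ∧
  (∀ᵐ t ∂volume, t ∈ Set.Icc (0:ℝ) τ → HasDerivAt ζ (ζ' t) t) ∧
  (∫ t in (0:ℝ)..τ, (Pf m (ζ t)) ^ 2 * (ζ' t).2) = 0

/-- A minimizing extremal for `ε`: `(ω, θ, λ)` solving the extremal ODE system on `[0,L]`,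
with `ω` a constrained competitor (parametrized by arc length, hence of length `L`),
minimizing the length among all constrained competitors, and whose image differs from
that of `ω̄_ε`. -/
def IsMinExtremal (m : ℕ) (ε L lam : ℝ) (ω : ℝ → ℝ × ℝ) (θ : ℝ → ℝ) : Prop :=
  0 < L ∧
  (∀ t ∈ Set.Icc (0:ℝ) L, HasDerivAt ω (Real.cos (θ t), Real.sin (θ t)) t) ∧
  (∀ t ∈ Set.Icc (0:ℝ) L, HasDerivAt θ (lam * Qf m (ω t)) t) ∧
  IsCompetitor m ε L ω (fun t => (Real.cos (θ t), Real.sin (θ t))) ∧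
  (∀ τ (ζ ζ' : ℝ → ℝ × ℝ), IsCompetitor m ε τ ζ ζ' → L ≤ eLength ζ' τ) ∧
  ω '' Set.Icc (0:ℝ) L ≠ barCurve m '' Set.Icc (0:ℝ) ε

open Set Real Filter Topology

theorem sq_le_two_mul_of_forall_abs_le {x s e : ℝ} (hs : 0 ≤ s) (he : 0 ≤ e)
    (h : ∀ δ > 0, |x| ≤ δ * s / 2 + e / δ) : x ^ 2 ≤ 2 * s * e := by
  by_contra! hlt
  have hx : 0 < |x| := abs_pos.2 (by rintro rfl; nlinarith [mul_nonneg hs he])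
  rw [← sq_abs] at hlt
  rcases hs.eq_or_lt with rfl | hs
  · have h' := h ((e + 1) / |x|) (by positivity)
    rw [mul_zero, zero_div, zero_add, div_div_eq_mul_div, le_div_iff₀ (by positivity)] at h'
    nlinarith
  · have h' := h (|x| / s) (by positivity)
    have hδ : |x| / s * s / 2 + e / (|x| / s) = |x| / 2 + e * s / |x| := by field_simp
    have : e * s / |x| < |x| / 2 := by rw [div_lt_div_iff₀ hx two_pos]; nlinarith
    linarith

theorem le_of_hasDerivAt_nonneg {f f' : ℝ → ℝ} {a b : ℝ} (hab : a ≤ b)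
    (hf : ∀ t ∈ Icc a b, HasDerivAt f (f' t) t) (hf' : ∀ t ∈ Icc a b, 0 ≤ f' t) : f a ≤ f b :=
  monotoneOn_of_hasDerivWithinAt_nonneg (convex_Icc a b)
    (fun t ht => (hf t ht).continuousAt.continuousWithinAt)
    (fun t ht => (hf t (interior_subset ht)).hasDerivWithinAt)
    (fun t ht => hf' t (interior_subset ht)) (left_mem_Icc.2 hab) (right_mem_Icc.2 hab) hab

theorem mul_cos_le {σ δ : ℝ} (hσ : |σ| ≤ 1) (hδ : 0 < δ) (x : ℝ) :
    σ * cos x ≤ δ / 2 + (1 - sin x) / δ := by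
  have hσ2 : σ ^ 2 ≤ 1 := by nlinarith [abs_nonneg σ, sq_abs σ]
  rw [div_add_div _ _ two_ne_zero hδ.ne', le_div_iff₀ (by positivity)]
  nlinarith [sq_nonneg (δ - σ * cos x), sq_nonneg (1 - sin x), sin_sq_add_cos_sq x,
    mul_nonneg (sub_nonneg.2 hσ2) (sq_nonneg (cos x))]

def HasTangentAngle (ω : ℝ → ℝ × ℝ) (θ : ℝ → ℝ) (s : Set ℝ) : Prop :=
  ∀ t ∈ s, HasDerivAt ω (cos (θ t), sin (θ t)) t

namespace HasTangentAngle

variable {ω : ℝ → ℝ × ℝ} {θ : ℝ → ℝ} {s : Set ℝ} {u v : ℝ}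

theorem mono {s' : Set ℝ} (h : HasTangentAngle ω θ s) (hs : s' ⊆ s) : HasTangentAngle ω θ s' :=
  fun t ht => h t (hs ht)

theorem hasDerivAt_fst (h : HasTangentAngle ω θ s) {t : ℝ} (ht : t ∈ s) :
    HasDerivAt (fun r => (ω r).1) (cos (θ t)) t := by
  exact hasFDerivAt_fst.comp_hasDerivAt t (h t ht)

theorem hasDerivAt_snd (h : HasTangentAngle ω θ s) {t : ℝ} (ht : t ∈ s) :
    HasDerivAt (fun r => (ω r).2) (sin (θ t)) t := by
  exact hasFDerivAt_snd.comp_hasDerivAt t (h t ht)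

theorem snd_sub_le (h : HasTangentAngle ω θ (Icc u v)) (huv : u ≤ v) :
    (ω v).2 - (ω u).2 ≤ v - u := by
  have := le_of_hasDerivAt_nonneg huv (fun t ht => (hasDerivAt_id t).sub (h.hasDerivAt_snd ht))
    (fun t _ => sub_nonneg.2 (sin_le_one (θ t)))
  simp only [Pi.sub_apply, id] at this
  linarith

theorem abs_fst_sub_le (h : HasTangentAngle ω θ (Icc u v)) (huv : u ≤ v) {δ : ℝ} (hδ : 0 < δ) :
    |(ω v).1 - (ω u).1| ≤ δ * (v - u) / 2 + ((v - u) - ((ω v).2 - (ω u).2)) / δ := by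
  have key : ∀ σ : ℝ, |σ| ≤ 1 →
      σ * ((ω v).1 - (ω u).1) ≤ δ * (v - u) / 2 + ((v - u) - ((ω v).2 - (ω u).2)) / δ := by
    intro σ hσ
    have := le_of_hasDerivAt_nonneg huv
      (f := fun r => δ / 2 * r + (r - (ω r).2) / δ - σ * (ω r).1)
      (fun t ht => (((hasDerivAt_id t).const_mul (δ / 2)).add
        (((hasDerivAt_id t).sub (h.hasDerivAt_snd ht)).div_const δ)).sub
        ((h.hasDerivAt_fst ht).const_mul σ))
      (fun t _ => by simp only [mul_one]; linarith [mul_cos_le hσ hδ (θ t)])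
    have hsplit : ((v - u) - ((ω v).2 - (ω u).2)) / δ = (v - (ω v).2) / δ - (u - (ω u).2) / δ := by
      ring
    linarith
  exact abs_le.2 ⟨by linarith [key (-1) (by norm_num)], by linarith [key 1 (by norm_num)]⟩

theorem sq_fst_sub_le (h : HasTangentAngle ω θ (Icc u v)) (huv : u ≤ v) :
    ((ω v).1 - (ω u).1) ^ 2 ≤ 2 * (v - u) * ((v - u) - ((ω v).2 - (ω u).2)) :=
  sq_le_two_mul_of_forall_abs_le (sub_nonneg.2 huv) (sub_nonneg.2 (h.snd_sub_le huv))
    fun δ hδ => by simpa only [mul_comm δ] using h.abs_fst_sub_le huv hδ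

end HasTangentAngle

theorem sqrt_pow_sq {x : ℝ} (hx : 0 ≤ x) (n : ℕ) : (√x ^ n) ^ 2 = x ^ n := by
  rw [← pow_mul, mul_comm, pow_mul, sq_sqrt hx]

section BarCurve

variable {m : ℕ} {ε : ℝ}

theorem barCurve_fst {t : ℝ} (ht : 0 ≤ t) : (barCurve m t).1 = √t ^ m := by
  simp only [barCurve, rpow_div_two_eq_sqrt _ ht, rpow_natCast]

theorem Pf_barCurve {t : ℝ} (ht : 0 ≤ t) : Pf m (barCurve m t) = 0 := by
  rw [Pf, barCurve_fst ht, sqrt_pow_sq ht]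
  simp [barCurve]

theorem hasDerivAt_barCurve (hm : 2 ≤ m) {t : ℝ} (ht : 0 ≤ t) :
    HasDerivAt (barCurve m) ((m : ℝ) / 2 * √t ^ (m - 2), 1) t := by
  have hm' : (1 : ℝ) ≤ (m : ℝ) / 2 := by
    rw [le_div_iff₀ two_pos]; exact_mod_cast hm
  have hexp : (m : ℝ) / 2 - 1 = ((m - 2 : ℕ) : ℝ) / 2 := by
    rw [Nat.cast_sub hm]; ring
  have := (hasDerivAt_rpow_const (x := t) (Or.inr hm')).prodMk (hasDerivAt_id t)
  rwa [hexp, rpow_div_two_eq_sqrt _ ht, rpow_natCast] at this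

theorem isCompetitor_barCurve (hm : 2 ≤ m) (hε : 0 ≤ ε) :
    IsCompetitor m ε ε (barCurve m) (fun t => ((m : ℝ) / 2 * √t ^ (m - 2), 1)) := by
  have hC1 : ContDiff ℝ 1 (barCurve m) :=
    (contDiff_rpow_const_of_le (by rw [le_div_iff₀ two_pos]; exact_mod_cast hm)).prodMk
      contDiff_id
  refine ⟨hε, hC1.contDiffOn.exists_lipschitzOnWith one_ne_zero (convex_Icc 0 ε) isCompact_Icc,
    ?_, rfl, Filter.Eventually.of_forall fun t ht => hasDerivAt_barCurve hm ht.1, ?_⟩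
  · simp [barCurve, zero_rpow (by positivity : (m : ℝ) / 2 ≠ 0)]
  · rw [intervalIntegral.integral_congr (g := fun _ => (0 : ℝ)), intervalIntegral.integral_zero]
    intro t ht
    rw [uIcc_of_le hε] at ht
    simp [Pf_barCurve ht.1]

theorem eLength_barCurve_le (hm : 2 ≤ m) (hε : 0 ≤ ε) :
    eLength (fun t => ((m : ℝ) / 2 * √t ^ (m - 2), 1)) ε
      ≤ ε + (m : ℝ) ^ 2 / 8 * ε ^ (m - 2) * ε := by
  have hbound : ∀ t ∈ Icc 0 ε, √(((m : ℝ) / 2 * √t ^ (m - 2)) ^ 2 + 1 ^ 2)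
      ≤ 1 + (m : ℝ) ^ 2 / 8 * ε ^ (m - 2) := by
    intro t ht
    have hpow : t ^ (m - 2) ≤ ε ^ (m - 2) := pow_le_pow_left₀ ht.1 ht.2 _
    rw [sqrt_le_left (by positivity), mul_pow, sqrt_pow_sq ht.1]
    nlinarith [sq_nonneg ((m : ℝ) ^ 2 / 8 * ε ^ (m - 2)), sq_nonneg (m : ℝ)]
  calc eLength (fun t => ((m : ℝ) / 2 * √t ^ (m - 2), 1)) ε
      ≤ ∫ _ in (0 : ℝ)..ε, (1 + (m : ℝ) ^ 2 / 8 * ε ^ (m - 2)) :=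
        intervalIntegral.integral_mono_on hε (Continuous.intervalIntegrable (by fun_prop) _ _)
          intervalIntegrable_const hbound
    _ = ε + (m : ℝ) ^ 2 / 8 * ε ^ (m - 2) * ε := by
        rw [intervalIntegral.integral_const, smul_eq_mul, sub_zero]; ring

end BarCurve

namespace IsMinExtremal

variable {m : ℕ} {ε L lam : ℝ} {ω : ℝ → ℝ × ℝ} {θ : ℝ → ℝ} {K r s t u v : ℝ}

theorem hasTangentAngle (h : IsMinExtremal m ε L lam ω θ) : HasTangentAngle ω θ (Icc 0 L) :=
  h.2.1

theorem continuousOn (h : IsMinExtremal m ε L lam ω θ) : ContinuousOn ω (Icc 0 L) :=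
  fun r hr => (h.2.1 r hr).continuousAt.continuousWithinAt

theorem continuousOn_angle (h : IsMinExtremal m ε L lam ω θ) : ContinuousOn θ (Icc 0 L) :=
  fun r hr => (h.2.2.1 r hr).continuousAt.continuousWithinAt

theorem apply_zero (h : IsMinExtremal m ε L lam ω θ) : ω 0 = (0, 0) :=
  h.2.2.2.1.2.2.1

theorem apply_length (h : IsMinExtremal m ε L lam ω θ) : ω L = barCurve m ε :=
  h.2.2.2.1.2.2.2.1

theorem integral_Pf_sq_mul_sin (h : IsMinExtremal m ε L lam ω θ) :
    ∫ r in (0 : ℝ)..L, Pf m (ω r) ^ 2 * sin (θ r) = 0 :=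
  h.2.2.2.1.2.2.2.2.2

theorem length_le (h : IsMinExtremal m ε L lam ω θ) (hm : 2 ≤ m) (hε : 0 ≤ ε) :
    L ≤ ε + (m : ℝ) ^ 2 / 8 * ε ^ (m - 2) * ε :=
  (h.2.2.2.2.1 ε _ _ (isCompetitor_barCurve hm hε)).trans (eLength_barCurve_le hm hε)

theorem snd_sub_le (h : IsMinExtremal m ε L lam ω θ) (hu : 0 ≤ u) (huv : u ≤ v) (hv : v ≤ L) :
    (ω v).2 - (ω u).2 ≤ v - u :=
  (h.hasTangentAngle.mono (Icc_subset_Icc hu hv)).snd_sub_le huv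

theorem snd_le (h : IsMinExtremal m ε L lam ω θ) (hr : r ∈ Icc 0 L) : (ω r).2 ≤ r := by
  simpa [h.apply_zero] using h.snd_sub_le le_rfl hr.1 hr.2

theorem sub_le_snd (h : IsMinExtremal m ε L lam ω θ) (hr : r ∈ Icc 0 L) :
    r - (L - ε) ≤ (ω r).2 := by
  have := h.snd_sub_le hr.1 hr.2 le_rfl
  rw [h.apply_length] at this
  simp only [barCurve] at this
  linarith

theorem le_length (h : IsMinExtremal m ε L lam ω θ) : ε ≤ L := by
  simpa [h.apply_length, barCurve] using h.snd_le ⟨h.1.le, le_rfl⟩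

theorem sq_fst_sub_le (h : IsMinExtremal m ε L lam ω θ) (hu : 0 ≤ u) (huv : u ≤ v) (hv : v ≤ L) :
    ((ω v).1 - (ω u).1) ^ 2 ≤ 2 * (v - u) * (L - ε) := by
  have hexcess : (v - u) - ((ω v).2 - (ω u).2) ≤ L - ε := by
    linarith [h.snd_le ⟨hu, huv.trans hv⟩, h.sub_le_snd ⟨hu.trans huv, hv⟩]
  calc ((ω v).1 - (ω u).1) ^ 2 ≤ 2 * (v - u) * ((v - u) - ((ω v).2 - (ω u).2)) :=
        (h.hasTangentAngle.mono (Icc_subset_Icc hu hv)).sq_fst_sub_le huv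
    _ ≤ 2 * (v - u) * (L - ε) := by gcongr

theorem abs_Pf_le (h : IsMinExtremal m ε L lam ω θ) (hε : 0 ≤ ε) (hr : r ∈ Icc 0 L) :
    |Pf m (ω r)| ≤ 2 * L * (L - ε) + L ^ m := by
  have hfst : (ω r).1 ^ 2 ≤ 2 * L * (L - ε) := by
    have := h.sq_fst_sub_le le_rfl hr.1 hr.2
    simp only [h.apply_zero, sub_zero] at this
    nlinarith [h.le_length, hr.2]
  have hsnd : |(ω r).2| ≤ L :=
    abs_le.2 ⟨by linarith [h.sub_le_snd hr, hr.1], (h.snd_le hr).trans hr.2⟩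
  calc |Pf m (ω r)| ≤ |(ω r).1 ^ 2| + |(ω r).2 ^ m| := abs_sub _ _
    _ ≤ 2 * L * (L - ε) + L ^ m := by
      rw [abs_of_nonneg (sq_nonneg _), abs_pow]
      gcongr

theorem continuousOn_Pf_sq (h : IsMinExtremal m ε L lam ω θ) :
    ContinuousOn (fun r => Pf m (ω r) ^ 2) (Icc 0 L) :=
  ((by unfold Pf; fun_prop : Continuous (Pf m)).comp_continuousOn h.continuousOn).pow 2

theorem integral_sin_angle (h : IsMinExtremal m ε L lam ω θ) :
    ∫ r in (0 : ℝ)..L, sin (θ r) = ε := by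
  rw [intervalIntegral.integral_eq_sub_of_hasDerivAt
    (fun r hr => h.hasTangentAngle.hasDerivAt_snd (uIcc_of_le h.1.le ▸ hr))
    ((continuous_sin.comp_continuousOn h.continuousOn_angle).intervalIntegrable_of_Icc h.1.le),
    h.apply_length, h.apply_zero, barCurve, sub_zero]

theorem integral_Pf_sq_le (h : IsMinExtremal m ε L lam ω θ) {B : ℝ}
    (hB : ∀ r ∈ Icc 0 L, |Pf m (ω r)| ≤ B) :
    ∫ r in (0 : ℝ)..L, Pf m (ω r) ^ 2 ≤ B ^ 2 * (L - ε) := by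
  have hsin : ContinuousOn (fun r => sin (θ r)) (Icc 0 L) :=
    continuous_sin.comp_continuousOn h.continuousOn_angle
  have hint : ∀ {f : ℝ → ℝ}, ContinuousOn f (Icc 0 L) → IntervalIntegrable f volume 0 L :=
    fun hf => hf.intervalIntegrable_of_Icc h.1.le
  calc ∫ r in (0 : ℝ)..L, Pf m (ω r) ^ 2
      = ∫ r in (0 : ℝ)..L, Pf m (ω r) ^ 2 * (1 - sin (θ r)) := by
        simp_rw [mul_one_sub]
        rw [intervalIntegral.integral_sub (hint h.continuousOn_Pf_sq)
          (hint (f := fun r => Pf m (ω r) ^ 2 * sin (θ r)) (h.continuousOn_Pf_sq.mul hsin)),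
          h.integral_Pf_sq_mul_sin, sub_zero]
    _ ≤ ∫ r in (0 : ℝ)..L, B ^ 2 * (1 - sin (θ r)) :=
        intervalIntegral.integral_mono_on h.1.le
          (hint (h.continuousOn_Pf_sq.mul (continuousOn_const.sub hsin)))
          (hint (continuousOn_const.mul (continuousOn_const.sub hsin)))
          fun r hr => mul_le_mul_of_nonneg_right
            ((sq_abs _).symm.trans_le (pow_le_pow_left₀ (abs_nonneg _) (hB r hr) 2))
            (sub_nonneg.2 (sin_le_one _))
    _ = B ^ 2 * (L - ε) := by
        rw [intervalIntegral.integral_const_mul, intervalIntegral.integral_sub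
          intervalIntegrable_const (hint hsin), h.integral_sin_angle]
        simp

theorem mul_sq_le_of_le_abs_Pf (h : IsMinExtremal m ε L lam ω θ) {B c : ℝ}
    (hB : ∀ r ∈ Icc 0 L, |Pf m (ω r)| ≤ B) (hu : 0 ≤ u) (huv : u ≤ v) (hv : v ≤ L) (hc : 0 ≤ c)
    (hPc : ∀ r ∈ Icc u v, c ≤ |Pf m (ω r)|) :
    (v - u) * c ^ 2 ≤ B ^ 2 * (L - ε) :=
  calc (v - u) * c ^ 2 = ∫ _ in u..v, c ^ 2 := by simp
    _ ≤ ∫ r in u..v, Pf m (ω r) ^ 2 :=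
        intervalIntegral.integral_mono_on huv intervalIntegrable_const
          ((h.continuousOn_Pf_sq.mono (Icc_subset_Icc hu hv)).intervalIntegrable_of_Icc huv)
          fun r hr => (pow_le_pow_left₀ hc (hPc r hr) 2).trans_eq (sq_abs _)
    _ ≤ ∫ r in (0 : ℝ)..L, Pf m (ω r) ^ 2 :=
        intervalIntegral.integral_mono_interval hu huv hv
          (Filter.Eventually.of_forall fun _ => sq_nonneg _)
          (h.continuousOn_Pf_sq.intervalIntegrable_of_Icc h.1.le)
    _ ≤ B ^ 2 * (L - ε) := h.integral_Pf_sq_le hB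


theorem abs_Pf_le_mul_pow (h : IsMinExtremal m ε L lam ω θ) (hm : 2 ≤ m) {A : ℝ} (hε : 0 < ε)
    (hL : L ≤ 2 * ε) (hD : L - ε ≤ A * ε ^ (m - 2) * ε) (hr : r ∈ Icc 0 L) :
    |Pf m (ω r)| ≤ (4 * A + 2 ^ m) * ε ^ m := by
  have hLm : L ^ m ≤ (2 * ε) ^ m := pow_le_pow_left₀ h.1.le hL m
  have hLD : 2 * L * (L - ε) ≤ 2 * (2 * ε) * (A * ε ^ (m - 2) * ε) := by
    gcongr; exact sub_nonneg.2 h.le_length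
  have hεm : A * (ε ^ (m - 2) * ε ^ 2) = A * ε ^ m := by rw [← pow_add, Nat.sub_add_cancel hm]
  rw [mul_pow] at hLm
  linarith [h.abs_Pf_le hε.le hr]

theorem snd_ge (h : IsMinExtremal m ε L lam ω θ) (hD : L - ε ≤ K / 2 * ε) (ht : t ∈ Icc 0 L)
    (hKt : K * ε ≤ (ω t).2) (hs : s ∈ Icc t L) : K / 2 * ε ≤ (ω s).2 := by
  linarith [h.snd_le ht, h.sub_le_snd ⟨ht.1.trans hs.1, hs.2⟩, hs.1]

theorem sq_fst_ge (h : IsMinExtremal m ε L lam ω θ) (hm : 2 ≤ m) {A κ : ℝ} (hK : 0 < K)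
    (hε : 0 < ε) (hA : 0 < A) (hL : L ≤ 2 * ε) (hD : L - ε ≤ A * ε ^ (m - 2) * ε) (hκ : 0 < κ)
    (hκK : κ ≤ K / 4) (hκA : κ ≤ (K / 4) ^ m / (16 * A))
    (hsmall : A * ε ^ (m - 2) < κ * ((K / 4) ^ m / 2) ^ 2 / (4 * A + 2 ^ m) ^ 2)
    (hs : s ∈ Icc 0 L) (hKs : K / 2 * ε ≤ (ω s).2) :
    (K / 4) ^ m / 8 * ε ^ m ≤ (ω s).1 ^ 2 := by
  set k := (K / 4) ^ m
  set B := 4 * A + 2 ^ m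
  have hεm : ε ^ (m - 2) * ε ^ 2 = ε ^ m := by rw [← pow_add, Nat.sub_add_cancel hm]
  have hD0 : 0 ≤ L - ε := sub_nonneg.2 h.le_length
  have hB : ∀ r ∈ Icc 0 L, |Pf m (ω r)| ≤ B * ε ^ m := fun r hr =>
    h.abs_Pf_le_mul_pow hm hε hL hD hr
  by_contra! hlt
  have hloc : ∀ r ∈ Icc (s - κ * ε) s, k / 2 * ε ^ m ≤ |Pf m (ω r)| := by
    intro r hr
    have hr0 : 0 ≤ r := by nlinarith [h.snd_le hs, hr.1]
    have hsnd : K / 4 * ε ≤ (ω r).2 := by nlinarith [h.snd_sub_le hr0 hr.2 hs.2, hr.1]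
    have hexcess : 2 * (s - r) * (L - ε) ≤ k / 8 * ε ^ m :=
      calc 2 * (s - r) * (L - ε) ≤ 2 * (κ * ε) * (A * ε ^ (m - 2) * ε) := by
            gcongr; linarith [hr.1]
        _ = 2 * (κ * A) * ε ^ m := by rw [← hεm]; ring
        _ ≤ 2 * (k / 16) * ε ^ m := by gcongr; rw [le_div_iff₀ (by positivity)] at hκA; linarith
        _ = k / 8 * ε ^ m := by ring
    have hfst : (ω r).1 ^ 2 ≤ k / 2 * ε ^ m := by
      nlinarith [h.sq_fst_sub_le hr0 hr.2 hs.2, sq_nonneg (2 * (ω s).1 - (ω r).1)]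
    have hpow : k * ε ^ m ≤ (ω r).2 ^ m := by
      rw [← mul_pow]; exact pow_le_pow_left₀ (by positivity) hsnd m
    rw [Pf, abs_sub_comm]
    exact le_abs.2 (Or.inl (by linarith))
  have hint := h.mul_sq_le_of_le_abs_Pf hB (by nlinarith [h.snd_le hs]) (by nlinarith) hs.2
    (by positivity) hloc
  rw [lt_div_iff₀ (by positivity)] at hsmall
  have := mul_lt_mul_of_pos_right hsmall (by positivity : 0 < ε * (ε ^ m) ^ 2)
  nlinarith [mul_le_mul_of_nonneg_left hD (sq_nonneg (B * ε ^ m))]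

theorem fst_pos (h : IsMinExtremal m ε L lam ω θ) (hε : 0 < ε) (ht : 0 ≤ t)
    (hne : ∀ s ∈ Icc t L, (ω s).1 ≠ 0) (hs : s ∈ Icc t L) : 0 < (ω s).1 := by
  by_contra! hneg
  have hcont : ContinuousOn (fun r => (ω r).1) (Icc s L) :=
    (continuous_fst.comp_continuousOn h.continuousOn).mono (Icc_subset_Icc (ht.trans hs.1) le_rfl)
  have hL : 0 ≤ (ω L).1 := by rw [h.apply_length]; exact (rpow_pos_of_pos hε _).le
  obtain ⟨r, hr, hr0⟩ := intermediate_value_Icc hs.2 hcont ⟨hneg, hL⟩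
  exact hne r ⟨hs.1.trans hr.1, hr.2⟩ hr0

theorem sqrt_mul_rpow_le_fst (h : IsMinExtremal m ε L lam ω θ) (hε : 0 < ε) (ht : 0 ≤ t)
    {γ : ℝ} (hγ : 0 < γ) (hfst : ∀ s ∈ Icc t L, γ * ε ^ m ≤ (ω s).1 ^ 2) (hs : s ∈ Icc t L) :
    √γ * ε ^ ((m : ℝ) / 2) ≤ (ω s).1 := by
  have hpos := h.fst_pos hε ht (fun r hr hr0 => by
    have := hfst r hr
    rw [hr0, zero_pow two_ne_zero] at this
    exact (by positivity : 0 < γ * ε ^ m).not_ge this) hs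
  rw [rpow_div_two_eq_sqrt _ hε.le, rpow_natCast,
    ← pow_le_pow_iff_left₀ (by positivity) hpos.le two_ne_zero, mul_pow, sq_sqrt hγ.le,
    sqrt_pow_sq hε.le]
  exact hfst s hs

end IsMinExtremal

theorem exists_pos_forall_mul_pow_lt {n : ℕ} (hn : n ≠ 0) (A : ℝ) {η : ℝ} (hη : 0 < η) :
    ∃ ε₀ > 0, ∀ ε ∈ Ioo 0 ε₀, A * ε ^ n < η := by
  have hlim : Tendsto (fun ε : ℝ => A * ε ^ n) (𝓝 0) (𝓝 0) :=
    (by fun_prop : Continuous fun ε : ℝ => A * ε ^ n).tendsto' 0 0 (by simp [zero_pow hn])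
  obtain ⟨ε₀, hε₀, hε₀η⟩ := Metric.eventually_nhds_iff.1 (hlim.eventually (gt_mem_nhds hη))
  exact ⟨ε₀, hε₀, fun ε hε => hε₀η (by rw [Real.dist_eq, sub_zero, abs_of_pos hε.1]; exact hε.2)⟩

theorem statement10_general (m : ℕ) (hm : 5 ≤ m) (K : ℝ) (hK : 0 < K) :
    ∃ ε₀ > (0:ℝ), ∃ C > (0:ℝ), ∀ ε ∈ Set.Ioo (0:ℝ) ε₀,
      ∀ (L lam : ℝ) (ω : ℝ → ℝ × ℝ) (θ : ℝ → ℝ), IsMinExtremal m ε L lam ω θ →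
        ∀ t ∈ Set.Icc (0:ℝ) L, K * ε ≤ (ω t).2 →
          ∀ s ∈ Set.Icc t L, C * ε ^ ((m : ℝ) / 2) ≤ (ω s).1 ∧ C * ε ≤ (ω s).2 := by
  set A : ℝ := (m : ℝ) ^ 2 / 8
  set k : ℝ := (K / 4) ^ m
  set κ : ℝ := min (K / 4) (k / (16 * A))
  set η : ℝ := min (min 1 (K / 2)) (κ * (k / 2) ^ 2 / (4 * A + 2 ^ m) ^ 2)
  have hA : 0 < A := by positivity
  have hκ : 0 < κ := by positivity
  obtain ⟨ε₀, hε₀, hsmall⟩ := exists_pos_forall_mul_pow_lt (n := m - 2) (by omega) A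
    (by positivity : 0 < η)
  refine ⟨ε₀, hε₀, min (√(k / 8)) (K / 2), by positivity, ?_⟩
  rintro ε ⟨hε, hεε₀⟩ L lam ω θ h t ht hKt s hs
  have hη := hsmall ε ⟨hε, hεε₀⟩
  have hD : L - ε ≤ A * ε ^ (m - 2) * ε := sub_le_iff_le_add'.2 (h.length_le (by omega) hε.le)
  have hDη : ∀ {c}, η ≤ c → L - ε ≤ c * ε := fun hc =>
    hD.trans (mul_le_mul_of_nonneg_right (hη.le.trans hc) hε.le)
  have hsnd : ∀ s ∈ Icc t L, K / 2 * ε ≤ (ω s).2 := fun s hs =>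
    h.snd_ge (hDη ((min_le_left _ _).trans (min_le_right _ _))) ht hKt hs
  have hfst : ∀ s ∈ Icc t L, k / 8 * ε ^ m ≤ (ω s).1 ^ 2 := fun s hs =>
    h.sq_fst_ge (by omega) hK hε hA (by linarith [hDη ((min_le_left _ _).trans (min_le_left _ _))])
      hD hκ (min_le_left _ _) (min_le_right _ _) (hη.trans_le (min_le_right _ _))
      ⟨ht.1.trans hs.1, hs.2⟩ (hsnd s hs)
  exact ⟨(mul_le_mul_of_nonneg_right (min_le_left _ _) (rpow_pos_of_pos hε _).le).trans
      (h.sqrt_mul_rpow_le_fst hε ht.1 (by positivity) hfst hs),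
    (mul_le_mul_of_nonneg_right (min_le_right _ _) hε.le).trans (hsnd s hs)⟩

/-- for small `ε`, once a minimizing extremal reaches height `ω₂(t) ≥ Kε`,
both its coordinates stay bounded below by `C(K) ε^{m/2}` and `C(K) ε` afterwards. -/
theorem statement10 (m : ℕ) (hodd : Odd m) (hm : 5 ≤ m) (K : ℝ) (hK : 0 < K) :
    ∃ ε₀ > (0:ℝ), ∃ C > (0:ℝ), ∀ ε ∈ Set.Ioo (0:ℝ) ε₀,
      ∀ (L lam : ℝ) (ω : ℝ → ℝ × ℝ) (θ : ℝ → ℝ), IsMinExtremal m ε L lam ω θ →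
        ∀ t ∈ Set.Icc (0:ℝ) L, K * ε ≤ (ω t).2 →
          ∀ s ∈ Set.Icc t L, C * ε ^ ((m : ℝ) / 2) ≤ (ω s).1 ∧ C * ε ≤ (ω s).2 :=
  statement10_general m hm K hK
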